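/- Let e(g) = Σ_{i=0}^{s} t_i·2^{t_i−1} + Σ_{i=0}^{s} i·2^{t_i} (binary expansion of g with exponents t_0 > ... > t_s). For n ≥ 2, the function g ↦ n·g − e(g) is strictly increasing on the range 1 ≤ g ≤ 2^{⌈n/2⌉}. -/

import Mathlib

/-- The strictly decreasing list of exponents `t_0 > t_1 > ⋯ > t_s` in the
binary expansion `g = Σ_{i=0}^{s} 2^(t_i)` of `g`. -/
def expList (g : ℕ) : List ℕ :=
  (((Finset.range (g + 1)).filter (fun k => g.testBit k)).sort (· ≤ ·)).reverse

/-- `e g = Σ_{i=0}^{s} t_i·2^(t_i−1) + Σ_{i=0}^{s} i·2^(t_i)` over the binary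
expansion `g = Σ_{i=0}^{s} 2^(t_i)` with `t_0 > t_1 > ⋯ > t_s ≥ 0` (and `e 0 = 0`). -/
def eHL (g : ℕ) : ℕ :=
  ((expList g).zipIdx.map (fun p => p.1 * 2 ^ (p.1 - 1) + p.2 * 2 ^ p.1)).sum

/-!
Going from `g` to `g + 1` raises `e` by exactly the number of `1`-bits of `g`: this follows by
strong induction from `e (2h) = 2 e(h) + h` (all exponents shift up by one) and
`e (2h + 1) = e (2h) + #bits(h)` (a new last exponent `0` appears at index `#bits(h)`).
For `g < 2^⌈n/2⌉` there are at most `⌈n/2⌉ < n` such bits, so each step of `g ↦ n g - e g`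
gains `n - #bits(g) > 0`.
-/

def eSum (l : List ℕ) : ℕ :=
  (l.zipIdx.map fun p => p.1 * 2 ^ (p.1 - 1) + p.2 * 2 ^ p.1).sum

theorem expList_eq_reverse_bitIndices (g : ℕ) : expList g = g.bitIndices.reverse := by
  have hfilter : (Finset.range (g + 1)).filter (fun k => g.testBit k) = g.bitIndices.toFinset := by
    ext a
    simp only [Finset.mem_filter, Finset.mem_range, List.mem_toFinset, Nat.mem_bitIndices,
      and_iff_right_iff_imp]
    intro ha
    have := Nat.ge_two_pow_of_testBit ha
    have := a.lt_two_pow_self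
    omega
  rw [expList, hfilter, (List.toFinset_sort _ Nat.bitIndices_nodup).2
    (Nat.bitIndices_sorted.pairwise.imp le_of_lt)]

theorem eHL_eq_eSum (g : ℕ) : eHL g = eSum g.bitIndices.reverse := by
  rw [eHL, expList_eq_reverse_bitIndices, eSum]

theorem eSum_map_add_one (l : List ℕ) :
    eSum (l.map (· + 1)) = 2 * eSum l + (l.map (2 ^ ·)).sum := by
  have hterm : ∀ t i : ℕ, (t + 1) * 2 ^ t + i * 2 ^ (t + 1)
      = 2 * (t * 2 ^ (t - 1) + i * 2 ^ t) + 2 ^ t := by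
    rintro (_ | t) i
    · simp only [zero_add, Nat.zero_sub, zero_mul, pow_zero]; ring
    · simp only [Nat.add_sub_cancel, pow_succ]; ring
  simp only [eSum, List.zipIdx_map, List.map_map, Function.comp_def, Prod.map, id,
    Nat.add_sub_cancel, hterm, List.sum_map_add, List.sum_map_mul_left]
  congr 1
  conv_rhs => rw [← List.zipIdx_map_fst 0 l, List.map_map]
  rfl

theorem eSum_append_zero (l : List ℕ) : eSum (l ++ [0]) = eSum l + l.length := by
  simp [eSum, List.zipIdx_append]

theorem eHL_two_mul (h : ℕ) : eHL (2 * h) = 2 * eHL h + h := by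
  rw [eHL_eq_eSum, eHL_eq_eSum, Nat.bitIndices_two_mul, ← List.map_reverse, eSum_map_add_one,
    List.map_reverse, List.sum_reverse, Nat.sum_map_two_pow_bitIndices]

theorem eHL_two_mul_add_one (h : ℕ) : eHL (2 * h + 1) = eHL (2 * h) + h.bitIndices.length := by
  rw [eHL_eq_eSum, eHL_eq_eSum, Nat.bitIndices_two_mul_add_one, Nat.bitIndices_two_mul,
    List.reverse_cons, eSum_append_zero, List.length_reverse, List.length_map]

theorem eHL_succ (g : ℕ) : eHL (g + 1) = eHL g + g.bitIndices.length := by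
  induction g using Nat.strong_induction_on with
  | _ g ih =>
    rcases Nat.even_or_odd' g with ⟨h, rfl | rfl⟩
    · rw [eHL_two_mul_add_one, Nat.bitIndices_two_mul, List.length_map]
    · rw [show 2 * h + 1 + 1 = 2 * (h + 1) by ring, eHL_two_mul, ih h (by omega),
        eHL_two_mul_add_one, eHL_two_mul, Nat.bitIndices_two_mul_add_one, List.length_cons,
        List.length_map]
      ring

theorem length_bitIndices_le_of_lt_two_pow {g m : ℕ} (hg : g < 2 ^ m) :
    g.bitIndices.length ≤ m := by
  have hsub : g.bitIndices.toFinset ⊆ Finset.range m := fun a ha =>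
    Finset.mem_range.2 <| (Nat.pow_lt_pow_iff_right (by norm_num)).1 <|
      (Nat.two_pow_le_of_mem_bitIndices (List.mem_toFinset.1 ha)).trans_lt hg
  simpa [List.toFinset_card_of_nodup Nat.bitIndices_nodup] using Finset.card_le_card hsub

/-- For `n ≥ 2`, the function `g ↦ n·g − e g` is strictly increasing on the
range `1 ≤ g ≤ 2^⌈n/2⌉`. -/
theorem eHL_strict_mono (n : ℕ) (hn : 2 ≤ n) :
    ∀ g₁ g₂ : ℕ, 1 ≤ g₁ → g₁ < g₂ → g₂ ≤ 2 ^ ((n + 1) / 2) →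
      (n * g₁ : ℤ) - eHL g₁ < (n * g₂ : ℤ) - eHL g₂ := by
  intro g₁ g₂ _ hlt hle
  have hstep : ∀ g : ℕ, g < 2 ^ ((n + 1) / 2) →
      (n * g : ℤ) - eHL g < (n * Order.succ g : ℤ) - eHL (Order.succ g) := by
    intro g hg
    have hbits : (g.bitIndices.length : ℤ) < n := by
      exact_mod_cast (length_bitIndices_le_of_lt_two_pow hg).trans_lt (by omega)
    rw [Order.succ_eq_add_one, eHL_succ]
    push_cast
    linarith
  exact strictMonoOn_Iic_of_lt_succ hstep (Set.mem_Iic.2 (by omega)) hle hlt
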